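/- For every a > 0, c > 0, b ≥ 0 and every complex number s with −b/a < Re(s) < c/a, the function t ↦ t^{s−1}·ψ_{a,b,c}(t) is integrable on (0,∞) and ∫_0^∞ t^{s−1}·ψ_{a,b,c}(t) dt = Γ(a·s + b)·Γ(c − a·s), where Γ is the complex Gamma function. -/

import Mathlib

/-!
Substituting `t = u ^ a` writes `ψ_{a,b,c}(t)` as `(Γ(b+c)/a) u^b (1+u)^{-(b+c)}`, so its Mellin
transform at `s` is `Γ(b+c)` times the Mellin transform of `(1+u)^{-(b+c)}` at `a s + b`. The
substitution `x = u / (1 + u)` turns the latter into the Beta integral `B(a s + b, c - a s)`,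
which equals `Γ(a s + b) Γ(c - a s) / Γ(b + c)`.
-/

open MeasureTheory Set

/-- The elementary function `ψ_{a,b,c}(t) = (Γ(b+c)/a) t^{b/a} (1 + t^{1/a})^{−b−c}`. -/
noncomputable def psiElem (a b c : ℝ) : ℝ → ℝ :=
  fun t => (Real.Gamma (b + c) / a) * t ^ (b / a) * (1 + t ^ (1 / a)) ^ (-b - c)

section Mellin

variable {E : Type*} [NormedAddCommGroup E] [NormedSpace ℂ E] {f g : ℝ → E} {s : ℂ} {m : E}

theorem HasMellin.congr (hf : HasMellin f s m) (hfg : EqOn f g (Ioi 0)) : HasMellin g s m := by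
  have h : EqOn (fun t : ℝ => (t : ℂ) ^ (s - 1) • f t) (fun t => (t : ℂ) ^ (s - 1) • g t)
      (Ioi 0) := fun t ht => by simp only [hfg ht]
  exact ⟨(integrableOn_congr_fun h measurableSet_Ioi).mp hf.1,
    (setIntegral_congr_fun measurableSet_Ioi h).symm.trans hf.2⟩

theorem HasMellin.cpow_smul {a : ℂ} (hf : HasMellin f (s + a) m) :
    HasMellin (fun t => (t : ℂ) ^ a • f t) s m :=
  ⟨MellinConvergent.cpow_smul.mpr hf.1, (mellin_cpow_smul f s a).trans hf.2⟩

theorem HasMellin.comp_rpow {a : ℝ} (ha : a ≠ 0) (hf : HasMellin f (s / a) m) :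
    HasMellin (fun t => f (t ^ a)) s (|a|⁻¹ • m) :=
  ⟨(MellinConvergent.comp_rpow ha).mpr hf.1, by rw [mellin_comp_rpow, hf.2]⟩

theorem HasMellin.const_smul (hf : HasMellin f s m) {R : Type*} [NormedRing R] [Module R E]
    [IsBoundedSMul R E] [SMulCommClass ℂ R E] (c : R) :
    HasMellin (fun t => c • f t) s (c • m) := by
  simpa only [hf.2] using hasMellin_const_smul hf.1 c

end Mellin

theorem hasDerivAt_div_one_add {u : ℝ} (hu : 1 + u ≠ 0) :
    HasDerivAt (fun u : ℝ => u / (1 + u)) ((1 + u) ^ 2)⁻¹ u :=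
  ((hasDerivAt_id' u).div ((hasDerivAt_id' u).const_add 1) hu).congr_deriv (by field_simp; ring)

theorem strictMonoOn_div_one_add : StrictMonoOn (fun u : ℝ => u / (1 + u)) (Ioi 0) := by
  intro u hu v hv huv
  simp only [mem_Ioi] at hu hv
  rw [div_lt_div_iff₀ (by linarith) (by linarith)]
  linarith

theorem image_div_one_add_Ioi : (fun u : ℝ => u / (1 + u)) '' Ioi 0 = Ioo 0 1 := by
  ext x
  constructor
  · rintro ⟨u, hu, rfl⟩
    have hu : 0 < u := hu
    exact ⟨by positivity, (div_lt_one (by linarith)).mpr (by linarith)⟩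
  · rintro ⟨hx0, hx1⟩
    refine ⟨x / (1 - x), div_pos hx0 (by linarith), ?_⟩
    have : 1 - x ≠ 0 := by linarith
    field_simp
    ring

noncomputable def betaIntegrand (p q : ℂ) (x : ℝ) : ℂ :=
  (x : ℂ) ^ (p - 1) * (1 - (x : ℂ)) ^ (q - 1)

theorem abs_deriv_smul_betaIntegrand_div_one_add {u : ℝ} (hu : 0 < u) (p q : ℂ) :
    |((1 + u) ^ 2)⁻¹| • betaIntegrand p q (u / (1 + u))
      = (u : ℂ) ^ (p - 1) • (1 + u : ℂ) ^ (-(p + q)) := by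
  have hv : (0 : ℝ) < 1 + u := by linarith
  have hvc : ((1 + u : ℝ) : ℂ) ≠ 0 := by exact_mod_cast hv.ne'
  have hsub : (1 : ℂ) - ((u / (1 + u) : ℝ) : ℂ) = (((1 + u)⁻¹ : ℝ) : ℂ) := by
    rw [← Complex.ofReal_one, ← Complex.ofReal_sub]
    congr 1
    field_simp
    ring
  have hpow : ((1 + u : ℝ) : ℂ) ^ (p + q)
      = ((1 + u : ℝ) : ℂ) ^ (p - 1) * ((1 + u : ℝ) : ℂ) ^ (q - 1) * ((1 + u : ℝ) : ℂ) ^ 2 := by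
    rw [← Complex.cpow_add _ _ hvc, ← Complex.cpow_natCast, ← Complex.cpow_add _ _ hvc]
    ring_nf
  rw [betaIntegrand, hsub, div_eq_mul_inv, Complex.ofReal_mul,
    Complex.mul_cpow_ofReal_nonneg hu.le (by positivity), Complex.ofReal_inv,
    Complex.inv_cpow_ofReal_nonneg hv.le, Complex.inv_cpow_ofReal_nonneg hv.le,
    abs_of_pos (by positivity), Complex.real_smul, smul_eq_mul, Complex.cpow_neg,
    show (1 + u : ℂ) = ((1 + u : ℝ) : ℂ) by push_cast; rfl, hpow]
  push_cast
  field_simp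

theorem hasMellin_one_add_cpow_neg {p r : ℂ} (hp : 0 < p.re) (hpr : p.re < r.re) :
    HasMellin (fun u : ℝ => (1 + u : ℂ) ^ (-r)) p
      (Complex.Gamma p * Complex.Gamma (r - p) / Complex.Gamma r) := by
  have hq : 0 < (r - p).re := by simpa using hpr
  have hderiv : ∀ u ∈ Ioi (0 : ℝ), HasDerivWithinAt (fun u : ℝ => u / (1 + u))
      ((1 + u) ^ 2)⁻¹ (Ioi 0) u := fun u hu =>
    (hasDerivAt_div_one_add (by linarith [mem_Ioi.mp hu])).hasDerivWithinAt
  have hintegrand : EqOn (fun u : ℝ => |((1 + u) ^ 2)⁻¹| • betaIntegrand p (r - p) (u / (1 + u)))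
      (fun u : ℝ => (u : ℂ) ^ (p - 1) • (1 + u : ℂ) ^ (-r)) (Ioi 0) := fun u hu => by
    simpa only [add_sub_cancel] using abs_deriv_smul_betaIntegrand_div_one_add hu p (r - p)
  have hconv : IntegrableOn (betaIntegrand p (r - p)) (Ioo 0 1) :=
    (Complex.betaIntegral_convergent hp hq).1.mono_set Ioo_subset_Ioc_self
  rw [← image_div_one_add_Ioi, integrableOn_image_iff_integrableOn_abs_deriv_smul
    measurableSet_Ioi hderiv strictMonoOn_div_one_add.injOn,
    integrableOn_congr_fun hintegrand measurableSet_Ioi] at hconv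
  have hbeta :
      ∫ x in Ioo (0 : ℝ) 1, betaIntegrand p (r - p) x = Complex.betaIntegral p (r - p) := by
    rw [Complex.betaIntegral, intervalIntegral.integral_of_le zero_le_one,
      integral_Ioc_eq_integral_Ioo]
    rfl
  have hΓ : Complex.Gamma r ≠ 0 := Complex.Gamma_ne_zero_of_re_pos (hp.trans hpr)
  refine ⟨hconv, ?_⟩
  rw [mellin, ← setIntegral_congr_fun measurableSet_Ioi hintegrand,
    ← integral_image_eq_integral_abs_deriv_smul measurableSet_Ioi hderiv
      strictMonoOn_div_one_add.injOn, image_div_one_add_Ioi, hbeta,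
    Complex.Gamma_mul_Gamma_eq_betaIntegral hp hq, add_sub_cancel, mul_div_cancel_left₀ _ hΓ]

theorem ofReal_psiElem_eq_comp_rpow (a b c : ℝ) {t : ℝ} (ht : 0 < t) :
    (psiElem a b c t : ℂ) = (Real.Gamma (b + c) / a) •
      (((t ^ (1 / a) : ℝ) : ℂ) ^ (b : ℂ) •
        (1 + ((t ^ (1 / a) : ℝ) : ℂ)) ^ (-((b + c : ℝ) : ℂ))) := by
  have hu : 0 ≤ t ^ (1 / a) := by positivity
  rw [← Complex.ofReal_cpow hu, ← Real.rpow_mul ht.le, one_div_mul_eq_div, ← Complex.ofReal_one,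
    ← Complex.ofReal_add, ← Complex.ofReal_neg, ← Complex.ofReal_cpow (by positivity),
    smul_eq_mul, Complex.real_smul, psiElem, neg_add', ← Complex.ofReal_mul, ← Complex.ofReal_mul,
    mul_assoc]

theorem stmt_5_general (a b c : ℝ) (ha : 0 < a) (s : ℂ)
    (hs₁ : -(b / a) < s.re) (hs₂ : s.re < c / a) :
    IntegrableOn (fun t : ℝ => (t : ℂ) ^ (s - 1) * (psiElem a b c t : ℂ))
      (Set.Ioi (0 : ℝ)) ∧
    ∫ t in Set.Ioi (0 : ℝ), (t : ℂ) ^ (s - 1) * (psiElem a b c t : ℂ)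
      = Complex.Gamma (a * s + b) * Complex.Gamma (c - a * s) := by
  rw [← neg_div, div_lt_iff₀' ha] at hs₁
  rw [lt_div_iff₀' ha] at hs₂
  have hp : 0 < (a * s + b : ℂ).re := by
    simp only [Complex.add_re, Complex.re_ofReal_mul, Complex.ofReal_re]
    linarith
  have hpr : (a * s + b : ℂ).re < ((b + c : ℝ) : ℂ).re := by
    simp only [Complex.add_re, Complex.re_ofReal_mul, Complex.ofReal_re]
    linarith
  have ha' : (a : ℂ) ≠ 0 := by exact_mod_cast ha.ne'
  have hs : s / ((1 / a : ℝ) : ℂ) = a * s := by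
    push_cast
    field_simp
  have hu := (hasMellin_one_add_cpow_neg hp hpr).cpow_smul.const_smul (Real.Gamma (b + c) / a)
  rw [← hs] at hu
  have hψ := (hu.comp_rpow (one_div_ne_zero ha.ne')).congr
    (fun t ht => (ofReal_psiElem_eq_comp_rpow a b c ht).symm)
  refine ⟨hψ.1, hψ.2.trans ?_⟩
  have hΓ : Complex.Gamma (b + c : ℝ) ≠ 0 :=
    Complex.Gamma_ne_zero_of_re_pos (by simpa using hp.trans hpr)
  have hc : ((b + c : ℝ) : ℂ) - (a * s + b) = c - a * s := by push_cast; ring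
  rw [hs, hc, abs_of_pos (one_div_pos.mpr ha), Complex.real_smul, Complex.real_smul,
    Complex.ofReal_div, ← Complex.Gamma_ofReal, one_div, inv_inv]
  field_simp

theorem stmt_5 (a b c : ℝ) (ha : 0 < a) (hc : 0 < c) (hb : 0 ≤ b) (s : ℂ)
    (hs₁ : -(b / a) < s.re) (hs₂ : s.re < c / a) :
    IntegrableOn (fun t : ℝ => (t : ℂ) ^ (s - 1) * (psiElem a b c t : ℂ))
      (Set.Ioi (0 : ℝ)) ∧
    ∫ t in Set.Ioi (0 : ℝ), (t : ℂ) ^ (s - 1) * (psiElem a b c t : ℂ)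
      = Complex.Gamma (a * s + b) * Complex.Gamma (c - a * s) :=
  stmt_5_general a b c ha s hs₁ hs₂
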